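/- arXiv:1506.04448 — 2 statements merged into one kernel-verified Lean document; each statement's English description precedes it below -/
import Mathlib

section
/- For vectors s_T, s_1, s_2, s_3 ∈ ℂᵇ, ⟨s_T, s_1 * s_2 * s_3⟩ = ⟨F⁻¹(F(s_T) ∘ conj(F(s_1)) ∘ conj(F(s_2))), s_3⟩, where * denotes circular convolution, ∘ element-wise product, F the discrete Fourier transform, and ⟨·,·⟩ the complex inner product Σ_i u_i conj(v_i). -/
/-! Convolution is adjoint to correlation: `⟨f, g ⋆ h⟩ = ⟨f ⋆ conjneg g, h⟩`, and `conjneg`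
distributes over `⋆`, so the left side equals `⟨sT ⋆ (conjneg s₁ ⋆ conjneg s₂), s₃⟩`. The DFT
turns `⋆` into the pointwise product and `conjneg` into complex conjugation, so the DFT of
`sT ⋆ (conjneg s₁ ⋆ conjneg s₂)` is `F sT ∘ conj (F s₁) ∘ conj (F s₂)`; Fourier inversion
(for Mathlib's `ZMod.dft`, with which `dft` and `idft` agree) concludes. -/

open ComplexConjugate

/-- Discrete Fourier transform on `ZMod b`. -/
noncomputable def dft (b : ℕ) [NeZero b] (x : ZMod b → ℂ) (k : ZMod b) : ℂ :=
  ∑ j : ZMod b, x j * Complex.exp (-2 * Real.pi * Complex.I * (j.val * k.val) / b)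

/-- Inverse discrete Fourier transform on `ZMod b`. -/
noncomputable def idft (b : ℕ) [NeZero b] (x : ZMod b → ℂ) (j : ZMod b) : ℂ :=
  (∑ k : ZMod b, x k * Complex.exp (2 * Real.pi * Complex.I * (j.val * k.val) / b)) / b

/-- Circular convolution over `ZMod b`. -/
noncomputable def cconv (b : ℕ) [NeZero b] (x y : ZMod b → ℂ) (t : ZMod b) : ℂ :=
  ∑ i : ZMod b, x i * y (t - i)

open scoped ZMod

section

variable {b : ℕ} [NeZero b]

lemma stdAddChar_mul_eq_exp (j k : ZMod b) :
    ZMod.stdAddChar (j * k) = Complex.exp (2 * Real.pi * Complex.I * (j.val * k.val) / b) := by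
  have hjk : j * k = (((j.val * k.val : ℕ) : ℤ) : ZMod b) := by simp
  rw [hjk, ZMod.stdAddChar_coe]
  push_cast
  rfl

lemma dft_eq_zmod_dft (x : ZMod b → ℂ) : dft b x = 𝓕 x := by
  ext k
  refine Finset.sum_congr rfl fun j _ => ?_
  rw [smul_eq_mul, mul_comm, AddChar.map_neg_eq_inv, stdAddChar_mul_eq_exp, ← Complex.exp_neg]
  ring_nf

lemma idft_eq_zmod_invDFT (x : ZMod b → ℂ) : idft b x = 𝓕⁻ x := by
  ext j
  rw [idft, ZMod.invDFT_apply, smul_eq_mul, div_eq_inv_mul]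
  congr 1
  refine Finset.sum_congr rfl fun k _ => ?_
  rw [smul_eq_mul, mul_comm, stdAddChar_mul_eq_exp, mul_comm (k.val : ℂ)]

lemma zmod_dft_conjneg (x : ZMod b → ℂ) : 𝓕 (conjneg x) = conj (𝓕 x) := by
  ext k
  simp only [ZMod.dft_apply, conjneg_apply, Pi.conj_apply, map_sum, smul_eq_mul, map_mul]
  refine Fintype.sum_equiv (Equiv.neg _) _ _ fun j => ?_
  simp [AddChar.map_neg_eq_conj]

lemma zmod_dft_cconv (x y : ZMod b → ℂ) : 𝓕 (cconv b x y) = 𝓕 x * 𝓕 y := by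
  ext k
  rw [Pi.mul_apply, ZMod.dft_apply, ZMod.dft_apply, ZMod.dft_apply, Finset.sum_mul_sum]
  simp only [cconv, smul_eq_mul, Finset.mul_sum]
  rw [Finset.sum_comm]
  refine Finset.sum_congr rfl fun i _ => Fintype.sum_equiv (Equiv.subRight i) _ _ fun t => ?_
  have hsplit : -(t * k) = -(i * k) + -((t - i) * k) := by ring
  rw [Equiv.subRight_apply, hsplit, AddChar.map_add_eq_mul]
  ring

lemma conjneg_cconv (x y : ZMod b → ℂ) :
    conjneg (cconv b x y) = cconv b (conjneg x) (conjneg y) := by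
  ext t
  simp only [conjneg_apply, cconv, map_sum, map_mul]
  refine Fintype.sum_equiv (Equiv.neg _) _ _ fun i => ?_
  simp only [Equiv.neg_apply, neg_neg, sub_neg_eq_add, neg_sub_left, add_comm]

lemma sum_mul_conj_cconv (f g h : ZMod b → ℂ) :
    ∑ t, f t * conj (cconv b g h t) = ∑ t, cconv b f (conjneg g) t * conj (h t) := by
  have lhs : ∑ t, f t * conj (cconv b g h t)
      = ∑ u, ∑ v, f (u + v) * conj (g u) * conj (h v) := by
    simp only [cconv, map_sum, map_mul, Finset.mul_sum]
    rw [Finset.sum_comm]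
    refine Finset.sum_congr rfl fun u _ => Fintype.sum_equiv (Equiv.subRight u) _ _ fun t => ?_
    simp only [Equiv.subRight_apply, add_sub_cancel]
    ring
  have rhs : ∑ t, cconv b f (conjneg g) t * conj (h t)
      = ∑ v, ∑ u, f (u + v) * conj (g u) * conj (h v) := by
    simp only [cconv, conjneg_apply, Finset.sum_mul, neg_sub]
    refine Finset.sum_congr rfl fun v _ => Fintype.sum_equiv (Equiv.subRight v) _ _ fun i => ?_
    simp only [Equiv.subRight_apply, sub_add_cancel]
  rw [lhs, rhs, Finset.sum_comm]

end

/-- Proposition 1 (shifting identity):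
⟨s_T, s₁ * s₂ * s₃⟩ = ⟨F⁻¹(F(s_T) ∘ conj(F s₁) ∘ conj(F s₂)), s₃⟩,
with ⟨u,v⟩ = ∑ u_i conj(v_i). -/
theorem stmt5 (b : ℕ) [NeZero b] (sT s1 s2 s3 : ZMod b → ℂ) :
    (∑ t : ZMod b, sT t * conj (cconv b (cconv b s1 s2) s3 t))
      = ∑ t : ZMod b,
          idft b (fun k => dft b sT k * conj (dft b s1 k) * conj (dft b s2 k)) t
            * conj (s3 t) := by
  have hF : (fun k => dft b sT k * conj (dft b s1 k) * conj (dft b s2 k))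
      = 𝓕 (cconv b sT (cconv b (conjneg s1) (conjneg s2))) := by
    simp only [dft_eq_zmod_dft, zmod_dft_cconv, zmod_dft_conjneg, mul_assoc]
    rfl
  rw [sum_mul_conj_cconv, conjneg_cconv, hF, idft_eq_zmod_invDFT, LinearEquiv.symm_apply_apply]
end

section
/- Let A, B ∈ ℝ^{n×...×n} (p-th order tensors) with symmetric tensor sketches s_A(t) = Σ_{H(i_1,...,i_p)=t} σ(i_1)···σ(i_p) A_{i_1,...,i_p} and s_B̃(t) = Σ_{H(i_1,...,i_p)=t, i_1≤...≤i_p} σ(i_1)···σ(i_p) B_{i_1,...,i_p}, where H(i_1,...,i_p) = (h(i_1)+...+h(i_p)) mod b, h is 2-wise independent (as a symmetric hash H), σ(i) are i.i.d. uniform over 4th roots of unity (p ≤ 3), and h, σ are independent. If A, B are symmetric tensors, then E[⟨s_A, s_B̃⟩] = ⟨A, B⟩. -/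
/-!
Expanding the inner product gives
`E⟨s_A, s_B̃⟩ = ∑_l ∑_{l' sorted} A_l B_{l'} E[σ(l) conj σ(l') 1{H(l) = H(l')}]`.
Since σ is independent of h, each expectation factors through the mean over uniform 4th roots
of unity of `∏_i z_i^{c_i} conj(z_i)^{c'_i}`, where `c_i, c'_i ≤ p ≤ 3` are the multiplicities of
`i` in `l` and `l'`. As `z^a conj(z)^c` averages to `[a = c]` for `a, c < 4`, only the sorted
rearrangement `l'` of `l` survives; for it `H(l) = H(l')` surely, and `B_{l'} = B_l` by symmetry.
-/

open Finset ComplexConjugate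
open scoped Classical

/-- The symmetric tensor sketch s_A of a p-th order tensor A on [n]^p, with hash
`hh : [n] → ZMod b` (symmetric hash H(l) = ∑_j h(l_j)) and complex signs `sg`. -/
noncomputable def symSketch (p n b : ℕ) [NeZero b]
    (hh : Fin n → ZMod b) (sg : Fin n → ℂ)
    (A : (Fin p → Fin n) → ℝ) (t : ZMod b) : ℂ :=
  ∑ l ∈ Finset.univ.filter (fun l : Fin p → Fin n => (∑ j, hh (l j)) = t),
    (∏ j, sg (l j)) * (A l : ℂ)

/-- The sketch of the upper-triangular restriction B̃ of B (only sorted tuples). -/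
noncomputable def symSketchTri (p n b : ℕ) [NeZero b]
    (hh : Fin n → ZMod b) (sg : Fin n → ℂ)
    (B : (Fin p → Fin n) → ℝ) (t : ZMod b) : ℂ :=
  ∑ l ∈ Finset.univ.filter
      (fun l : Fin p → Fin n => (∑ j, hh (l j)) = t ∧ Monotone l),
    (∏ j, sg (l j)) * (B l : ℂ)

open Polynomial (nthRootsFinset mem_nthRootsFinset)

theorem Complex.sum_nthRootsFinset_one_pow {q : ℕ} (hq : 0 < q) (k : ℕ) :
    ∑ z ∈ nthRootsFinset q (1 : ℂ), z ^ k = if q ∣ k then (q : ℂ) else 0 := by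
  have hζ := Complex.isPrimitiveRoot_exp q hq.ne'
  set ζ := Complex.exp (2 * Real.pi * Complex.I / q)
  have hroot : ∀ {z : ℂ}, z ∈ nthRootsFinset q (1 : ℂ) ↔ z ^ q = 1 := mem_nthRootsFinset hq 1
  split_ifs with hk
  · obtain ⟨m, rfl⟩ := hk
    rw [sum_congr rfl fun z hz => by rw [pow_mul, hroot.1 hz, one_pow], sum_const,
      hζ.card_nthRootsFinset, nsmul_one]
  · -- multiplication by a primitive root permutes the roots of unity
    have hrot : ζ ^ k * ∑ z ∈ nthRootsFinset q (1 : ℂ), z ^ k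
        = ∑ z ∈ nthRootsFinset q (1 : ℂ), z ^ k := by
      have hζinv : ζ * ζ ^ (q - 1) = 1 := by
        rw [← pow_succ', Nat.sub_add_cancel hq, hζ.pow_eq_one]
      rw [mul_sum]
      refine sum_nbij' (ζ * ·) (ζ ^ (q - 1) * ·) (fun z hz => ?_) (fun z hz => ?_)
        (fun z _ => ?_) (fun z _ => ?_) (fun z _ => (mul_pow ζ z k).symm)
      · rw [hroot, mul_pow, hζ.pow_eq_one, hroot.1 hz, one_mul]
      · rw [hroot, mul_pow, ← pow_mul, mul_comm (q - 1), pow_mul, hζ.pow_eq_one, one_pow,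
          hroot.1 hz, one_mul]
      · rw [← mul_assoc, mul_comm _ ζ, hζinv, one_mul]
      · rw [← mul_assoc, hζinv, one_mul]
    have hne : ζ ^ k - 1 ≠ 0 := sub_ne_zero.2 fun h => hk ((hζ.pow_eq_one_iff_dvd k).1 h)
    exact (mul_eq_zero.1 (by linear_combination hrot)).resolve_left hne

theorem Complex.sum_nthRootsFinset_one_pow_mul_conj_pow {q a c : ℕ} (ha : a < q) (hc : c < q) :
    ∑ z ∈ nthRootsFinset q (1 : ℂ), z ^ a * conj z ^ c = if a = c then (q : ℂ) else 0 := by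
  have hq : 0 < q := by omega
  have hconj : ∀ z ∈ nthRootsFinset q (1 : ℂ), z ^ a * conj z ^ c = z ^ (a + (q - c)) := by
    intro z hz
    have hzq : z ^ q = 1 := (mem_nthRootsFinset hq 1).1 hz
    rw [← Complex.inv_eq_conj (Complex.norm_eq_one_of_pow_eq_one hzq hq.ne'), inv_pow,
      pow_add, inv_eq_of_mul_eq_one_right (by rw [← pow_add, Nat.add_sub_cancel' hc.le, hzq])]
  have hdvd : q ∣ a + (q - c) ↔ a = c := by
    constructor
    · rintro ⟨m, hm⟩
      rcases m with _ | _ | m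
      · omega
      · omega
      · have : a + (q - c) < 2 * q := by omega
        nlinarith
    · rintro rfl
      exact ⟨1, by omega⟩
  simp only [sum_congr rfl hconj, Complex.sum_nthRootsFinset_one_pow hq, hdvd]

section Tuples

variable {α M : Type*} {p : ℕ}

lemma ofFn_eq_ofFn_iff_card_fiber_eq [DecidableEq α] {l l' : Fin p → α} :
    (List.ofFn l : Multiset α) = List.ofFn l' ↔ ∀ a, #{j | l j = a} = #{j | l' j = a} := by
  have hcount : ∀ (f : Fin p → α) a, (List.ofFn f : Multiset α).count a = #{j | f j = a} := by
    intro f a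
    rw [← Fin.univ_val_map, Multiset.count_map, ← Finset.filter_val, Finset.card_val]
    simp only [eq_comm]
  simp only [Multiset.ext, hcount]

lemma sum_comp_eq_of_ofFn_eq [AddCommMonoid M] {l l' : Fin p → α}
    (hm : (List.ofFn l : Multiset α) = List.ofFn l') (f : α → M) :
    ∑ j, f (l j) = ∑ j, f (l' j) := by
  simp only [sum_eq_multiset_sum, ← Function.comp_apply (f := f), ← Multiset.map_map,
    Fin.univ_val_map, hm]

lemma eq_of_monotone_of_ofFn_eq [LinearOrder α] {l l' : Fin p → α} (hl : Monotone l)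
    (hl' : Monotone l') (hm : (List.ofFn l : Multiset α) = List.ofFn l') : l = l' :=
  List.ofFn_injective <|
    (Multiset.coe_eq_coe.1 hm).eq_of_sortedLE hl.sortedLE_ofFn hl'.sortedLE_ofFn

lemma sum_filter_monotone_ofFn_eq [LinearOrder α] [Fintype α] [AddCommMonoid M]
    (B : (Fin p → α) → M) (hB : ∀ l (π : Equiv.Perm (Fin p)), B (l ∘ π) = B l)
    (l : Fin p → α) :
    ∑ l' with Monotone l' ∧ (List.ofFn l : Multiset α) = List.ofFn l', B l' = B l := by
  have hsort : (List.ofFn l : Multiset α) = List.ofFn (l ∘ Tuple.sort l) :=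
    Multiset.coe_eq_coe.2 ((Tuple.sort l).ofFn_comp_perm l).symm
  have hfilter : ({l' | Monotone l' ∧ (List.ofFn l : Multiset α) = List.ofFn l'} :
      Finset (Fin p → α)) = {l ∘ Tuple.sort l} := by
    ext l'
    simp only [mem_filter, mem_univ, true_and, mem_singleton]
    constructor
    · rintro ⟨hmono, hm⟩
      exact eq_of_monotone_of_ofFn_eq hmono (Tuple.monotone_sort l) (hm.symm.trans hsort)
    · rintro rfl
      exact ⟨Tuple.monotone_sort l, hsort⟩
  rw [hfilter, sum_singleton, hB]

lemma prod_comp_eq_prod_pow_card_fiber {ι : Type*} [Fintype ι] [Fintype α] [DecidableEq α]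
    [CommMonoid M] (l : ι → α) (g : α → M) :
    ∏ j, g (l j) = ∏ a, g a ^ #{j | l j = a} := by
  rw [← prod_fiberwise' univ l]
  simp only [prod_const]

end Tuples

noncomputable def rootsOfUnityMean (q n : ℕ) (F : (Fin n → ℂ) → ℂ) : ℂ :=
  (1 / q : ℂ) ^ n * ∑ g ∈ Fintype.piFinset fun _ => nthRootsFinset q (1 : ℂ), F g

lemma rootsOfUnityMean_prod_mul_conj_prod {p q n : ℕ} (hpq : p < q) (l l' : Fin p → Fin n) :
    rootsOfUnityMean q n (fun g => (∏ j, g (l j)) * ∏ j, conj (g (l' j)))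
      = if (List.ofFn l : Multiset (Fin n)) = List.ofFn l' then 1 else 0 := by
  have hcard : ∀ (f : Fin p → Fin n) i, #{j | f j = i} < q := fun f i =>
    (card_filter_le _ _).trans_lt (by simpa using hpq)
  have hq : (q : ℂ) ≠ 0 := Nat.cast_ne_zero.2 (by omega)
  have hprod : ∀ g : Fin n → ℂ, (∏ j, g (l j)) * ∏ j, conj (g (l' j))
      = ∏ i, g i ^ #{j | l j = i} * conj (g i) ^ #{j | l' j = i} := fun g => by
    rw [prod_comp_eq_prod_pow_card_fiber l g,
      prod_comp_eq_prod_pow_card_fiber l' (fun i => conj (g i)), prod_mul_distrib]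
  have hfactor : ∀ i, (1 / q : ℂ) * ∑ z ∈ nthRootsFinset q (1 : ℂ),
      z ^ #{j | l j = i} * conj z ^ #{j | l' j = i}
        = if #{j | l j = i} = #{j | l' j = i} then 1 else 0 := fun i => by
    rw [Complex.sum_nthRootsFinset_one_pow_mul_conj_pow (hcard l i) (hcard l' i)]
    split_ifs <;> simp [hq]
  rw [rootsOfUnityMean, sum_congr rfl fun g _ => hprod g,
    ← prod_univ_sum (fun _ => nthRootsFinset q (1 : ℂ))
      (fun i z => z ^ #{j | l j = i} * conj z ^ #{j | l' j = i}),
    ← Fin.prod_const, ← prod_mul_distrib, prod_congr rfl fun i _ => hfactor i, prod_boole]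
  simp only [mem_univ, true_implies, ofFn_eq_ofFn_iff_card_fiber_eq]

section WeightedSpace

variable {Ω X : Type*} [Fintype Ω] {w : Ω → ℝ} {q n : ℕ} {σ : Ω → Fin n → ℂ}

/-- Under the weights `w`, the coordinates of `σ` are i.i.d. uniform `q`-th roots of unity,
independent of `h`. -/
def IsIndepUniformRootsOfUnity (w : Ω → ℝ) (q : ℕ) (σ : Ω → Fin n → ℂ) (h : Ω → X) : Prop :=
  ∀ (g : Fin n → ℂ) (S : Set X), ∑ ω with σ ω = g ∧ h ω ∈ S, w ω
    = (if ∀ i, g i ^ q = 1 then ((1 : ℝ) / q) ^ n else 0) * ∑ ω with h ω ∈ S, w ω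

lemma sum_filter_weight_mul_eq_rootsOfUnityMean_mul {h : Ω → X} (hq : 0 < q)
    (hσ : IsIndepUniformRootsOfUnity w q σ h) (S : Set X) (F : (Fin n → ℂ) → ℂ) :
    ∑ ω with h ω ∈ S, (w ω : ℂ) * F (σ ω)
      = rootsOfUnityMean q n F * ∑ ω with h ω ∈ S, (w ω : ℂ) := by
  set V := Fintype.piFinset fun _ : Fin n => nthRootsFinset q (1 : ℂ)
  have hV : ∀ g, g ∈ V ↔ ∀ i, g i ^ q = 1 := fun g => by
    simp only [V, Fintype.mem_piFinset, mem_nthRootsFinset hq]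
  have hfiber : ∀ g, ∑ ω ∈ {ω | h ω ∈ S} with σ ω = g, (w ω : ℂ) * F (σ ω)
      = if g ∈ V then (1 / q : ℂ) ^ n * F g * ∑ ω with h ω ∈ S, (w ω : ℂ) else 0 := by
    intro g
    have hweight : ∑ ω ∈ {ω | h ω ∈ S} with σ ω = g, (w ω : ℂ)
        = (if g ∈ V then (1 / q : ℂ) ^ n else 0) * ∑ ω with h ω ∈ S, (w ω : ℂ) := by
      have hσg : ((∑ ω with σ ω = g ∧ h ω ∈ S, w ω : ℝ) : ℂ)
          = (if g ∈ V then (1 / q : ℂ) ^ n else 0) * ((∑ ω with h ω ∈ S, w ω : ℝ) : ℂ) := by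
        rw [hσ g S]
        simp only [hV]
        split_ifs <;> push_cast <;> ring
      rw [filter_filter, ← Complex.ofReal_sum, ← Complex.ofReal_sum, ← hσg]
      congr 2
      ext ω
      simp only [mem_filter, mem_univ, true_and, and_comm]
    rw [sum_congr rfl fun ω hω => by rw [(mem_filter.1 hω).2], ← sum_mul, hweight]
    split_ifs <;> ring
  -- `σ` need not attain every point of `V`, hence the fibres over `V ∪ range σ`
  rw [← sum_fiberwise_of_maps_to (t := V ∪ univ.image σ)
      fun ω _ => mem_union_right _ (mem_image_of_mem σ (mem_univ ω)),
    sum_congr rfl fun g _ => hfiber g, ← sum_filter, filter_mem_eq_inter, union_inter_cancel_left,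
    ← sum_mul, ← mul_sum, rootsOfUnityMean]

lemma sum_weight_mul_signs_mul_hash_eq {M : Type*} [AddCommMonoid M] [DecidableEq M]
    {p : ℕ} {h : Ω → Fin n → M} (hpq : p < q) (hw1 : ∑ ω, w ω = 1)
    (hσ : IsIndepUniformRootsOfUnity w q σ h) (l l' : Fin p → Fin n) :
    ∑ ω, (w ω : ℂ) * ((∏ j, σ ω (l j)) * (∏ j, conj (σ ω (l' j)))
        * if ∑ j, h ω (l j) = ∑ j, h ω (l' j) then 1 else 0)
      = if (List.ofFn l : Multiset (Fin n)) = List.ofFn l' then 1 else 0 := by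
  -- an opaque `S`, so that `h ω ∈ S` is decided classically, as in `hσ`
  obtain ⟨S, hS⟩ : ∃ S : Set (Fin n → M), ∀ f, f ∈ S ↔ ∑ j, f (l j) = ∑ j, f (l' j) :=
    ⟨_, fun _ => Iff.rfl⟩
  have hrestrict : ∑ ω, (w ω : ℂ) * ((∏ j, σ ω (l j)) * (∏ j, conj (σ ω (l' j)))
        * if ∑ j, h ω (l j) = ∑ j, h ω (l' j) then 1 else 0)
      = ∑ ω with h ω ∈ S, (w ω : ℂ) * ((∏ j, σ ω (l j)) * ∏ j, conj (σ ω (l' j))) := by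
    rw [sum_filter]
    refine sum_congr rfl fun ω _ => ?_
    split_ifs <;> simp_all
  rw [hrestrict, sum_filter_weight_mul_eq_rootsOfUnityMean_mul (by omega) hσ S
      (fun g => (∏ j, g (l j)) * ∏ j, conj (g (l' j))),
    rootsOfUnityMean_prod_mul_conj_prod hpq]
  split_ifs with hm
  · rw [filter_true_of_mem fun ω _ => (hS _).2 (sum_comp_eq_of_ofFn_eq hm (h ω)), one_mul,
      ← Complex.ofReal_sum, hw1, Complex.ofReal_one]
  · rw [zero_mul]

end WeightedSpace

lemma sum_symSketch_mul_conj_symSketchTri {p n b : ℕ} [NeZero b] (hh : Fin n → ZMod b)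
    (sg : Fin n → ℂ) (A B : (Fin p → Fin n) → ℝ) :
    ∑ t, symSketch p n b hh sg A t * conj (symSketchTri p n b hh sg B t)
      = ∑ l, ∑ l' with Monotone l', (A l : ℂ) * B l' * ((∏ j, sg (l j)) * (∏ j, conj (sg (l' j)))
          * if ∑ j, hh (l j) = ∑ j, hh (l' j) then 1 else 0) := by
  have hfiber : ∀ t, symSketch p n b hh sg A t * conj (symSketchTri p n b hh sg B t)
      = ∑ l with ∑ j, hh (l j) = t,
          (∏ j, sg (l j)) * A l * conj (symSketchTri p n b hh sg B (∑ j, hh (l j))) := by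
    intro t
    rw [symSketch, sum_mul]
    exact sum_congr rfl fun l hl => by rw [(mem_filter.1 hl).2]
  rw [sum_congr rfl fun t _ => hfiber t, sum_fiberwise]
  refine sum_congr rfl fun l _ => ?_
  rw [symSketchTri, map_sum, mul_sum, sum_filter, sum_filter]
  refine sum_congr rfl fun l' _ => ?_
  by_cases hmono : Monotone l' <;> by_cases hH : ∑ j, hh (l j) = ∑ j, hh (l' j)
  all_goals simp [hmono, hH, eq_comm, map_prod]
  ring

theorem stmt9_general
    (p n b : ℕ) (hp : p ≤ 3) [NeZero b]
    (Ω : Type*) [Fintype Ω] (w : Ω → ℝ)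
    (hw1 : ∑ ω, w ω = 1)
    (h : Ω → Fin n → ZMod b) (σ : Ω → Fin n → ℂ)
    -- σ is i.i.d. uniform over the 4th roots of unity and independent of h:
    (hσ : ∀ (g : Fin n → ℂ) (S : Set (Fin n → ZMod b)),
        (∑ ω ∈ Finset.univ.filter (fun ω => σ ω = g ∧ h ω ∈ S), w ω)
          = (if ∀ i, (g i) ^ 4 = 1 then ((1 : ℝ) / 4) ^ n else 0)
              * ∑ ω ∈ Finset.univ.filter (fun ω => h ω ∈ S), w ω)
    (A B : (Fin p → Fin n) → ℝ)
    (hB : ∀ (l : Fin p → Fin n) (π : Equiv.Perm (Fin p)), B (l ∘ π) = B l) :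
    (∑ ω, (w ω : ℂ) *
        ∑ t : ZMod b,
          symSketch p n b (h ω) (σ ω) A t * conj (symSketchTri p n b (h ω) (σ ω) B t))
      = ∑ l : Fin p → Fin n, (A l : ℂ) * (B l : ℂ) := by
  have hσ4 : IsIndepUniformRootsOfUnity w 4 σ h := fun g S => by exact_mod_cast hσ g S
  have hsigns := sum_weight_mul_signs_mul_hash_eq (by omega : p < 4) hw1 hσ4
  calc _ = ∑ l, ∑ l' with Monotone l', (A l : ℂ) * B l' * ∑ ω, (w ω : ℂ) *
          ((∏ j, σ ω (l j)) * (∏ j, conj (σ ω (l' j)))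
            * if ∑ j, h ω (l j) = ∑ j, h ω (l' j) then 1 else 0) := by
        simp_rw [sum_symSketch_mul_conj_symSketchTri, mul_sum]
        rw [sum_comm]
        refine sum_congr rfl fun l _ => ?_
        rw [sum_comm]
        refine sum_congr rfl fun l' _ => ?_
        simp only [mul_left_comm]
    _ = ∑ l, (A l : ℂ) * ∑ l' with Monotone l' ∧ (List.ofFn l : Multiset (Fin n)) = List.ofFn l',
          (B l' : ℂ) := by
        simp_rw [hsigns, mul_ite, mul_one, mul_zero, ← sum_filter, filter_filter, mul_sum]
    _ = _ := sum_congr rfl fun l _ => by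
        rw [sum_filter_monotone_ofFn_eq (fun l => (B l : ℂ)) (fun l π => by rw [hB]) l]

/-- Unbiasedness of symmetric tensor sketches (Lemma: E⟨s_A, s_B̃⟩ = ⟨A,B⟩),
for symmetric p-th order tensors A, B (p ≤ 3), where σ is i.i.d. uniform over
the 4th roots of unity and independent of the hash h, and the symmetric hash H
is 2-wise independent.  The probability space is a finite weighted space (Ω, w). -/
theorem stmt9
    (p n b : ℕ) (hp : p ≤ 3) (hp0 : 0 < p) [NeZero b] (hn : 0 < n)
    (Ω : Type*) [Fintype Ω] (w : Ω → ℝ)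
    (hw0 : ∀ ω, 0 ≤ w ω) (hw1 : ∑ ω, w ω = 1)
    (h : Ω → Fin n → ZMod b) (σ : Ω → Fin n → ℂ)
    -- σ is i.i.d. uniform over the 4th roots of unity and independent of h:
    (hσ : ∀ (g : Fin n → ℂ) (S : Set (Fin n → ZMod b)),
        (∑ ω ∈ Finset.univ.filter (fun ω => σ ω = g ∧ h ω ∈ S), w ω)
          = (if ∀ i, (g i) ^ 4 = 1 then ((1 : ℝ) / 4) ^ n else 0)
              * ∑ ω ∈ Finset.univ.filter (fun ω => h ω ∈ S), w ω)
    -- the symmetric hash H is 2-wise independent: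
    (hH : ∀ (l l' : Fin p → Fin n),
        Multiset.ofList (List.ofFn l) ≠ Multiset.ofList (List.ofFn l') →
        ∀ t t' : ZMod b,
          (∑ ω ∈ Finset.univ.filter
              (fun ω => (∑ j, h ω (l j)) = t ∧ (∑ j, h ω (l' j)) = t'), w ω)
            = 1 / (b : ℝ) ^ 2)
    (A B : (Fin p → Fin n) → ℝ)
    (hA : ∀ (l : Fin p → Fin n) (π : Equiv.Perm (Fin p)), A (l ∘ π) = A l)
    (hB : ∀ (l : Fin p → Fin n) (π : Equiv.Perm (Fin p)), B (l ∘ π) = B l) :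
    (∑ ω, (w ω : ℂ) *
        ∑ t : ZMod b,
          symSketch p n b (h ω) (σ ω) A t * conj (symSketchTri p n b (h ω) (σ ω) B t))
      = ∑ l : Fin p → Fin n, (A l : ℂ) * (B l : ℂ) :=
  stmt9_general p n b hp Ω w hw1 h σ hσ A B hB
end
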